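/- arXiv:math/0503116 — 8 statements merged into one kernel-verified Lean document; each statement's English description precedes it below -/
import Mathlib

section
/- Each Mann composition ∘ᵢ on the set of partial n-place functions on A is associative: (f ∘ᵢ g) ∘ᵢ h = f ∘ᵢ (g ∘ᵢ h) for all partial n-place functions f, g, h. -/
/-- The type of partial `n`-place functions on `A`. -/
abbrev PFn (n : ℕ) (A : Type) := (Fin n → A) → Option A

/-- Menger superposition `f[g₁ … gₙ]`. -/
def Menger {n : ℕ} {A : Type} (f : PFn n A) (g : Fin n → PFn n A) : PFn n A :=
  fun a => if h : ∀ i, (g i a).isSome then f (fun i => (g i a).get (h i)) else none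

/-- The `i`-th `n`-place projector `Iⁱ`. -/
def proj {n : ℕ} {A : Type} (i : Fin n) : PFn n A := fun a => some (a i)

/-- The `i`-th Mann composition `f ∘ᵢ g`. -/
def mann {n : ℕ} {A : Type} (i : Fin n) (f g : PFn n A) : PFn n A :=
  fun a => (g a).bind fun b => f (Function.update a i b)

/-- Iterated Mann composition `f ∘ᵢ₁ g₁ ∘ᵢ₂ ⋯ ∘ᵢₛ gₛ` (left to right). -/
def iter {n : ℕ} {A : Type} (f : PFn n A) : List (Fin n × PFn n A) → PFn n A
  | [] => f
  | p :: l => iter (mann p.1 f p.2) l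

/-- `μᵢ(∘ᵢ₁ … ∘ᵢₛ g₁ … gₛ)`. -/
def mu {n : ℕ} {A : Type} (i : Fin n) : List (Fin n × PFn n A) → Option (PFn n A)
  | [] => none
  | p :: l => if p.1 = i then some (iter p.2 l) else mu i l

/-- Each Mann composition `∘ᵢ` is associative. -/
theorem mann_assoc {n : ℕ} {A : Type} (i : Fin n) (f g h : PFn n A) :
    mann i (mann i f g) h = mann i f (mann i g h) := by
  funext a
  simp only [mann, Option.bind_assoc]
  cases h a with
  | none => rfl
  | some c =>
    simp only [Option.bind_some, Function.update_idem]
end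

section
/- For partial n-place functions f, g, h₁,…,hₙ on A and any index i: (f ∘ᵢ g)[h₁…hₙ] = f[h₁ … hᵢ₋₁ g[h₁…hₙ] hᵢ₊₁ … hₙ]. -/
section Menger

variable {n : ℕ} {A : Type}

theorem menger_apply_of_eq_some {f : PFn n A} {h : Fin n → PFn n A} {a : Fin n → A}
    {b : Fin n → A} (hb : ∀ j, h j a = some (b j)) : Menger f h a = f b := by
  simp [Menger, hb]

theorem menger_apply_eq_none {f : PFn n A} {h : Fin n → PFn n A} {a : Fin n → A} {j : Fin n}
    (hj : h j a = none) : Menger f h a = none :=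
  dif_neg fun hdef => by simpa [hj] using hdef j

theorem menger_update_apply_of_eq_some {f : PFn n A} {h : Fin n → PFn n A} {G : PFn n A}
    {a b : Fin n → A} {c : A} (i : Fin n) (hb : ∀ j, h j a = some (b j)) (hc : G a = some c) :
    Menger f (Function.update h i G) a = f (Function.update b i c) := by
  refine menger_apply_of_eq_some fun j => ?_
  rcases eq_or_ne j i with rfl | hji
  · simp [hc]
  · simp [Function.update_of_ne hji, hb j]

theorem exists_eq_some_or_exists_eq_none (h : Fin n → PFn n A) (a : Fin n → A) :
    (∃ b : Fin n → A, ∀ j, h j a = some (b j)) ∨ ∃ j, h j a = none := by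
  by_cases hdef : ∀ j, (h j a).isSome
  · exact Or.inl ⟨fun j => (h j a).get (hdef j), fun j => by simp⟩
  · push Not at hdef
    exact Or.inr (by simpa using hdef)

end Menger

/-- `(f ∘ᵢ g)[h₁…hₙ] = f[h₁ … hᵢ₋₁ g[h₁…hₙ] hᵢ₊₁ … hₙ]`. -/
theorem mann_menger {n : ℕ} {A : Type} (i : Fin n) (f g : PFn n A)
    (h : Fin n → PFn n A) :
    Menger (mann i f g) h = Menger f (Function.update h i (Menger g h)) := by
  funext a
  rcases exists_eq_some_or_exists_eq_none h a with ⟨b, hb⟩ | ⟨j, hj⟩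
  · have hgh : Menger g h a = g b := menger_apply_of_eq_some hb
    rw [menger_apply_of_eq_some hb, mann]
    cases hc : g b with
    | none =>
      refine (menger_apply_eq_none (j := i) ?_).symm
      simp [hgh, hc]
    | some c => exact (menger_update_apply_of_eq_some i hb (hgh.trans hc)).symm
  · have hgh : Menger g h a = none := menger_apply_eq_none hj
    rw [menger_apply_eq_none hj]
    refine (menger_apply_eq_none (j := j) ?_).symm
    rcases eq_or_ne j i with rfl | hji
    · simp [hgh]
    · simp [Function.update_of_ne hji, hj]
end

section
/- For partial n-place functions f, g₁,…,gₙ, h on A and any index i: f[g₁…gₙ] ∘ᵢ h = f[(g₁ ∘ᵢ h) … (gₙ ∘ᵢ h)]. -/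
-- For `n = 0` the right-hand side would be `F` of the empty family even when `x = none`.
theorem Option.bind_dite_forall_isSome {n : ℕ} {α β γ : Type*} [Nonempty (Fin n)] (x : Option α)
    (G : Fin n → α → Option β) (F : (Fin n → β) → Option γ) :
    (x.bind fun b => if h : ∀ k, (G k b).isSome then F (fun k => (G k b).get (h k)) else none)
      = if h : ∀ k, (x.bind (G k)).isSome then F (fun k => (x.bind (G k)).get (h k))
        else none := by
  cases x with
  | none => simp
  | some b => rfl

/-- `f[g₁…gₙ] ∘ᵢ h = f[(g₁ ∘ᵢ h) … (gₙ ∘ᵢ h)]`. -/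
theorem menger_mann {n : ℕ} {A : Type} (i : Fin n) (f : PFn n A)
    (g : Fin n → PFn n A) (h : PFn n A) :
    mann i (Menger f g) h = Menger f (fun k => mann i (g k) h) := by
  have : Nonempty (Fin n) := ⟨i⟩
  funext a
  exact Option.bind_dite_forall_isSome (h a) (fun k b => g k (Function.update a i b)) f
end

section
/- For any partial n-place functions f, g₁,…,gₛ on A and any sequence of indices i₁,…,iₛ ∈ {1,…,n}, the iterated Mann composition satisfies f ∘ᵢ₁ g₁ ∘ᵢ₂ ⋯ ∘ᵢₛ gₛ = f[(I¹ ∘ᵢ₁ g₁ ⋯ ∘ᵢₛ gₛ) … (Iⁿ ∘ᵢ₁ g₁ ⋯ ∘ᵢₛ gₛ)]. -/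
/-!
A Mann composition is a Menger superposition, `f ∘ᵢ g = f[I¹ … g … Iⁿ]` with `g` in the `i`-th
place, and superposition is associative with the projectors as right unit. Write `u` for
`(I¹ … g₁ … Iⁿ)` and `H` for the tuple `(Iᵏ ∘ᵢ₂ g₂ ⋯ ∘ᵢₛ gₛ)ₖ`. The induction hypothesis, applied
to `f ∘ᵢ₁ g₁` and to each `Iᵏ ∘ᵢ₁ g₁`, turns the left side into `f[u][H] = f[u₁[H] … uₙ[H]]` and
the right side into `f[(Iᵏ[u][H])ₖ] = f[I¹ … Iⁿ][u₁[H] … uₙ[H]]`.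
-/

variable {n : ℕ} {A : Type}

theorem menger_proj (f : PFn n A) : Menger f proj = f := by
  funext a
  simp [Menger, proj]

theorem menger_assoc (f : PFn n A) (g h : Fin n → PFn n A) :
    Menger (Menger f g) h = Menger f (fun k => Menger (g k) h) := by
  funext a
  by_cases hh : ∀ j, (h j a).isSome
  · simp [Menger, hh]
  · simp only [Menger, hh, ↓reduceDIte, Option.isSome_none, Bool.false_eq_true,
      right_eq_dite_iff]
    exact fun hall => absurd (fun j => (hall j).elim) hh

theorem mann_eq_menger (i : Fin n) (f g : PFn n A) :
    mann i f g = Menger f (Function.update proj i g) := by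
  funext a
  have hdef : (∀ k, (Function.update proj i g k a).isSome) ↔ (g a).isSome := by
    refine ⟨fun h => by simpa using h i, fun h k => ?_⟩
    rcases eq_or_ne k i with rfl | hk
    · simpa using h
    · simp [Function.update_of_ne hk, proj]
  cases hg : g a with
  | none => simp [mann, Menger, hg, hdef]
  | some b =>
    simp only [mann, Menger, hg, hdef, Option.bind_some, Option.isSome_some, dite_true]
    congr 1
    funext k
    rcases eq_or_ne k i with rfl | hk
    · simp [hg]
    · simp [Function.update_of_ne hk, proj]

/-- Proposition 1: `f ∘ᵢ₁ g₁ ⋯ ∘ᵢₛ gₛ = f[(I¹ ∘ᵢ₁ g₁ ⋯ ∘ᵢₛ gₛ) … (Iⁿ ∘ᵢ₁ g₁ ⋯ ∘ᵢₛ gₛ)]`. -/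
theorem iter_eq_menger {n : ℕ} {A : Type} (f : PFn n A)
    (l : List (Fin n × PFn n A)) :
    iter f l = Menger f (fun k => iter (proj k) l) := by
  induction l generalizing f with
  | nil => exact (menger_proj f).symm
  | cons p l ih =>
    obtain ⟨i, g⟩ := p
    generalize (fun k => iter (proj k) l) = H at ih
    calc iter (mann i f g) l
        = Menger f (fun k => Menger (Function.update proj i g k) H) := by
          rw [ih, mann_eq_menger, menger_assoc]
      _ = Menger (Menger f proj) (fun k => Menger (Function.update proj i g k) H) := by
          rw [menger_proj]
      _ = Menger f (fun k => iter (mann i (proj k) g) l) := by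
          simp only [ih, mann_eq_menger, menger_assoc]
end

section
/- A (2,n)-semigroup (G; ∘₁,…,∘ₙ) has a faithful representation by partial n-place functions if and only if for all g, x₁,…,xₛ, y₁,…,yₖ ∈ G and all index sequences i₁,…,iₛ, j₁,…,jₖ ∈ {1,…,n}: if μᵢ(∘ᵢ₁…∘ᵢₛ x₁…xₛ) = μᵢ(∘ⱼ₁…∘ⱼₖ y₁…yₖ) for every i = 1,…,n (both sides defined and equal, or both undefined), then g ∘ᵢ₁ x₁ ⋯ ∘ᵢₛ xₛ = g ∘ⱼ₁ y₁ ⋯ ∘ⱼₖ yₖ. -/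
/-- Iterated operations `g ∘ᵢ₁ x₁ ∘ᵢ₂ ⋯ ∘ᵢₛ xₛ` in an abstract `(2,n)`-semigroup. -/
def iterG {n : ℕ} {G : Type} (op : Fin n → G → G → G) (g : G) :
    List (Fin n × G) → G
  | [] => g
  | p :: l => iterG op (op p.1 g p.2) l

/-- `μᵢ(∘ᵢ₁ … ∘ᵢₛ x₁ … xₛ)` in an abstract `(2,n)`-semigroup. -/
def muG {n : ℕ} {G : Type} (op : Fin n → G → G → G) (i : Fin n) :
    List (Fin n × G) → Option G
  | [] => none
  | p :: l => if p.1 = i then some (iterG op p.2 l) else muG op i l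

/-!
For partial functions, `(f ∘ᵢ₁ x₁ ⋯ ∘ᵢₛ xₛ)(a)` is `f` applied to the vector whose `i`-th entry
is `μᵢ(a)`, or `aᵢ` where `μᵢ` is undefined; so it depends only on the `μᵢ`, and the condition
transfers along any faithful representation. Conversely, under the condition, `g` acts on
`Option G`-vectors by sending the profile `(μ₁(l), …, μₙ(l))` of a list `l` to `g ∘ l`, and is
undefined elsewhere. This is well defined, turns `∘ᵢ` into Mann composition since prepending
`(i, y)` to `l` updates the `i`-th entry of the profile to `y ∘ l`, and is faithful because the
empty list has the constant-`none` profile, on which `g` takes the value `g`.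
-/

section Iterates

variable {n : ℕ} {G H : Type}

def IterDeterminedByMu (op : Fin n → G → G → G) : Prop :=
  ∀ (g : G) (l₁ l₂ : List (Fin n × G)),
    (∀ i, muG op i l₁ = muG op i l₂) → iterG op g l₁ = iterG op g l₂

theorem map_iterG {op : Fin n → G → G → G} {op' : Fin n → H → H → H} (P : G → H)
    (hP : ∀ i x y, P (op i x y) = op' i (P x) (P y)) (g : G) (l : List (Fin n × G)) :
    P (iterG op g l) = iterG op' (P g) (l.map (Prod.map id P)) := by
  induction l generalizing g with
  | nil => rfl
  | cons p l ih => simp only [iterG, List.map_cons, Prod.map_fst, Prod.map_snd, id, ih, hP]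

theorem map_muG {op : Fin n → G → G → G} {op' : Fin n → H → H → H} (P : G → H)
    (hP : ∀ i x y, P (op i x y) = op' i (P x) (P y)) (i : Fin n) (l : List (Fin n × G)) :
    muG op' i (l.map (Prod.map id P)) = (muG op i l).map P := by
  induction l with
  | nil => rfl
  | cons p l ih =>
    by_cases h : p.1 = i
    · simp [muG, h, map_iterG P hP]
    · simp [muG, h, ih]

theorem IterDeterminedByMu.of_injective_hom {op : Fin n → G → G → G}
    {op' : Fin n → H → H → H} (hH : IterDeterminedByMu op') (P : G → H)
    (hinj : Function.Injective P) (hP : ∀ i x y, P (op i x y) = op' i (P x) (P y)) :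
    IterDeterminedByMu op := by
  intro g l₁ l₂ h
  apply hinj
  rw [map_iterG P hP, map_iterG P hP]
  exact hH _ _ _ fun i => by rw [map_muG P hP, map_muG P hP, h i]

end Iterates

section PartialFunctions

variable {n : ℕ} {A : Type}

def mannArgs : List (Fin n × PFn n A) → (Fin n → A) → Option (Fin n → A)
  | [], a => some a
  | p :: l, a => (mannArgs l a).bind fun c => (p.2 c).map (Function.update c p.1)

theorem iterG_mann_apply (f : PFn n A) (l : List (Fin n × PFn n A)) (a : Fin n → A) :
    iterG mann f l a = (mannArgs l a).bind f := by
  induction l generalizing f with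
  | nil => rfl
  | cons p l ih =>
    rw [iterG, ih, mannArgs]
    cases mannArgs l a with
    | none => rfl
    | some c =>
      simp only [Option.bind_some, mann]
      cases p.2 c <;> rfl

theorem mannArgs_eq_some_iff (l : List (Fin n × PFn n A)) (a c : Fin n → A) :
    mannArgs l a = some c ↔ ∀ i, (muG mann i l).elim (some (a i)) (· a) = some (c i) := by
  induction l generalizing c with
  | nil => simp [mannArgs, muG, funext_iff]
  | cons p l ih =>
    obtain ⟨j, x⟩ := p
    have hμ : ∀ i, muG mann i ((j, x) :: l) =
        if j = i then some (iterG mann x l) else muG mann i l := fun _ => rfl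
    simp only [mannArgs, hμ, Option.bind_eq_some_iff, Option.map_eq_some_iff]
    constructor
    · rintro ⟨d, hd, b, hb, rfl⟩ i
      by_cases hji : j = i
      · subst hji
        simp [iterG_mann_apply, hd, hb]
      · simpa [hji, Function.update_of_ne (Ne.symm hji)] using (ih d).1 hd i
    · intro hc
      have hj := hc j
      simp only [if_true, Option.elim_some, iterG_mann_apply,
        Option.bind_eq_some_iff] at hj
      obtain ⟨d, hd, hb⟩ := hj
      refine ⟨d, hd, c j, hb, funext fun i => ?_⟩
      by_cases hji : j = i
      · subst hji
        exact Function.update_self ..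
      · rw [Function.update_of_ne (Ne.symm hji)]
        have := hc i
        rw [if_neg hji, (ih d).1 hd i] at this
        exact Option.some_injective _ this

theorem iterDeterminedByMu_mann : IterDeterminedByMu (mann (n := n) (A := A)) := by
  intro f l₁ l₂ h
  funext a
  have hargs : mannArgs l₁ a = mannArgs l₂ a :=
    Option.ext fun c => by simp only [mannArgs_eq_some_iff, h]
  rw [iterG_mann_apply, iterG_mann_apply, hargs]

end PartialFunctions

section CanonicalRepresentation

variable {n : ℕ} {G : Type} {op : Fin n → G → G → G}

open Classical in
noncomputable def canonRep (op : Fin n → G → G → G) (g : G) : PFn n (Option G) := fun a =>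
  if h : ∃ l, (fun i => muG op i l) = a then some (some (iterG op g h.choose)) else none

theorem canonRep_apply_of_eq (hop : IterDeterminedByMu op) (g : G) {l : List (Fin n × G)}
    {a : Fin n → Option G} (hl : (fun i => muG op i l) = a) :
    canonRep op g a = some (some (iterG op g l)) := by
  have h : ∃ l, (fun i => muG op i l) = a := ⟨l, hl⟩
  rw [canonRep, dif_pos h, hop g h.choose l fun i => congrFun (h.choose_spec.trans hl.symm) i]

theorem canonRep_apply_of_forall_ne (g : G) {a : Fin n → Option G}
    (ha : ∀ l, (fun i => muG op i l) ≠ a) : canonRep op g a = none := by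
  rw [canonRep, dif_neg (not_exists.2 ha)]

theorem canonRep_injective (hop : IterDeterminedByMu op) : Function.Injective (canonRep op) :=
  fun x y hxy => by
    have hnil : (fun i => muG op i []) = fun _ => none := rfl
    simpa [canonRep_apply_of_eq hop _ hnil, iterG] using congrFun hxy fun _ => none

theorem muG_cons_eq_update (i : Fin n) (y : G) (l : List (Fin n × G)) :
    (fun j => muG op j ((i, y) :: l)) =
      Function.update (fun j => muG op j l) i (some (iterG op y l)) := by
  funext j
  by_cases hij : i = j
  · subst hij
    simp [muG]
  · simp [muG, hij, Function.update_of_ne (Ne.symm hij)]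

theorem canonRep_op (hop : IterDeterminedByMu op) (i : Fin n) (x y : G) :
    canonRep op (op i x y) = mann i (canonRep op x) (canonRep op y) := by
  funext a
  by_cases ha : ∃ l, (fun j => muG op j l) = a
  · obtain ⟨l, rfl⟩ := ha
    rw [mann, canonRep_apply_of_eq hop _ rfl, canonRep_apply_of_eq hop _ rfl, Option.bind_some,
      canonRep_apply_of_eq hop _ (muG_cons_eq_update i y l)]
    rfl
  · rw [not_exists] at ha
    rw [mann, canonRep_apply_of_forall_ne _ ha, canonRep_apply_of_forall_ne _ ha,
      Option.bind_none]

end CanonicalRepresentation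

theorem faithful_representation_iff_general {n : ℕ} {G : Type}
    (op : Fin n → G → G → G) :
    (∃ (A : Type) (P : G → PFn n A), Function.Injective P ∧
        ∀ i x y, P (op i x y) = mann i (P x) (P y)) ↔
      ∀ (g : G) (l₁ l₂ : List (Fin n × G)),
        (∀ i, muG op i l₁ = muG op i l₂) → iterG op g l₁ = iterG op g l₂ := by
  constructor
  · rintro ⟨A, P, hinj, hP⟩
    exact iterDeterminedByMu_mann.of_injective_hom P hinj hP
  · intro hop
    exact ⟨Option G, canonRep op, canonRep_injective hop, canonRep_op hop⟩

/-- Theorem 1: a `(2,n)`-semigroup has a faithful representation by partial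
`n`-place functions iff the condition (14) holds. -/
theorem faithful_representation_iff {n : ℕ} {G : Type}
    (op : Fin n → G → G → G)
    (assoc : ∀ i x y z, op i (op i x y) z = op i x (op i y z)) :
    (∃ (A : Type) (P : G → PFn n A), Function.Injective P ∧
        ∀ i x y, P (op i x y) = mann i (P x) (P y)) ↔
      ∀ (g : G) (l₁ l₂ : List (Fin n × G)),
        (∀ i, muG op i l₁ = muG op i l₂) → iterG op g l₁ = iterG op g l₂ :=
  faithful_representation_iff_general op
end

section
/- Every (2,n)-semigroup isomorphic to a (2,n)-semigroup of partial n-place functions is also isomorphic to a (2,n)-semigroup of full n-place functions: given a set Φ of partial n-place functions on A closed under the Mann compositions, adjoin a new element c to A and extend each f ∈ Φ to a full function f⁰ on A ∪ {c} by setting f⁰(x) = f(x) on dom(f) and f⁰(x) = c otherwise; then f ↦ f⁰ is an isomorphism of (Φ; ∘₁,…,∘ₙ) onto (Φ⁰; ∘₁,…,∘ₙ). -/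
/-- The `i`-th Mann composition of full (total) `n`-place functions on `B`. -/
def mannT {n : ℕ} {B : Type} (i : Fin n) (f g : (Fin n → B) → B) :
    (Fin n → B) → B :=
  fun a => f (Function.update a i (g a))

/-- The extension `f⁰` of a partial `n`-place function `f` on `A` to a full
`n`-place function on `A ∪ {c}`, where `A ∪ {c}` is modelled as `Option A`
with `none` playing the role of the new element `c`. -/
def extend {n : ℕ} {A : Type} (f : PFn n A) : (Fin n → Option A) → Option A :=
  fun x => if h : ∀ i, (x i).isSome then f (fun i => (x i).get (h i)) else none

theorem exists_eq_comp_some_or_exists_eq_none {ι α : Type*} (x : ι → Option α) :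
    (∃ a : ι → α, x = some ∘ a) ∨ ∃ j, x j = none := by
  by_cases h : ∀ j, (x j).isSome
  · exact .inl ⟨fun j => (x j).get (h j), funext fun j => (Option.some_get (h j)).symm⟩
  · obtain ⟨j, hj⟩ := not_forall.mp h
    exact .inr ⟨j, Option.not_isSome_iff_eq_none.mp hj⟩

namespace PFn

variable {n : ℕ} {A : Type}

theorem extend_comp_some (f : PFn n A) (a : Fin n → A) : extend f (some ∘ a) = f a := by
  simp [extend]

theorem extend_of_eq_none (f : PFn n A) {x : Fin n → Option A} (j : Fin n)
    (hj : x j = none) : extend f x = none :=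
  dif_neg fun h => by simpa [hj] using h j

theorem extend_injective : Function.Injective (extend (n := n) (A := A)) :=
  fun f g hfg => funext fun a => by
    simpa only [extend_comp_some] using congrFun hfg (some ∘ a)

theorem extend_mann (i : Fin n) (f g : PFn n A) :
    extend (mann i f g) = mannT i (extend f) (extend g) := by
  funext x
  rcases exists_eq_comp_some_or_exists_eq_none x with ⟨a, rfl⟩ | ⟨j, hj⟩
  · rw [mannT, extend_comp_some, extend_comp_some, mann]
    cases g a with
    | none => exact (extend_of_eq_none f i (Function.update_self ..)).symm
    | some b => rw [Option.bind_some, ← Function.comp_update, extend_comp_some]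
  · rw [mannT, extend_of_eq_none _ j hj, extend_of_eq_none _ j hj,
      extend_of_eq_none f i (Function.update_self ..)]

end PFn

theorem extend_isomorphism_general {n : ℕ} {A : Type}
    (Φ : Set (PFn n A)) :
    Set.InjOn (extend (n := n) (A := A)) Φ ∧
      ∀ i, ∀ f ∈ Φ, ∀ g ∈ Φ,
        extend (mann i f g) = mannT i (extend f) (extend g) :=
  ⟨PFn.extend_injective.injOn, fun i f _ g _ => PFn.extend_mann i f g⟩

/-- Theorem 2: `f ↦ f⁰` is an isomorphism of a `(2,n)`-semigroup `Φ` of partial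
`n`-place functions onto the `(2,n)`-semigroup `Φ⁰` of full `n`-place
functions on `A ∪ {c}`. -/
theorem extend_isomorphism {n : ℕ} {A : Type}
    (Φ : Set (PFn n A))
    (hΦ : ∀ i, ∀ f ∈ Φ, ∀ g ∈ Φ, mann i f g ∈ Φ) :
    Set.InjOn (extend (n := n) (A := A)) Φ ∧
      ∀ i, ∀ f ∈ Φ, ∀ g ∈ Φ,
        extend (mann i f g) = mannT i (extend f) (extend g) :=
  extend_isomorphism_general Φ
end

section
/- In the (2,n)-semigroup of full n-place functions on A₀ = A ∪ {c} (with extensions f⁰ sending undefined tuples to c), the map f ↦ f⁰ preserves each Mann composition: (f ∘ᵢ g)⁰ = f⁰ ∘ᵢ g⁰ for all partial n-place functions f, g on A, provided c is 'absorbing' in the sense that any tuple containing c is outside dom(f) (i.e. f⁰ of such a tuple equals c). -/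
section Extend

variable {n : ℕ} {A : Type}

theorem extend_some_comp (f : PFn n A) (a : Fin n → A) :
    extend f (some ∘ a) = f a := by
  simp [extend]

theorem extend_of_eq_none (f : PFn n A) {x : Fin n → Option A} {j : Fin n}
    (hj : x j = none) : extend f x = none :=
  dif_neg fun h => by simpa [hj] using h j

theorem extend_update_none (f : PFn n A) (x : Fin n → Option A) (i : Fin n) :
    extend f (Function.update x i none) = none :=
  extend_of_eq_none f (Function.update_self i none x)

theorem eq_some_comp_or_exists_eq_none (x : Fin n → Option A) :
    (∃ a : Fin n → A, x = some ∘ a) ∨ ∃ j, x j = none := by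
  by_cases h : ∀ j, (x j).isSome
  · exact .inl ⟨fun j => (x j).get (h j), funext fun j => (Option.some_get (h j)).symm⟩
  · simp only [not_forall, Bool.not_eq_true, Option.isSome_eq_false_iff,
      Option.isNone_iff_eq_none] at h
    exact .inr h

end Extend

/-- `(f ∘ᵢ g)⁰ = f⁰ ∘ᵢ g⁰`. -/
theorem extend_mann {n : ℕ} {A : Type} (i : Fin n) (f g : PFn n A) :
    extend (mann i f g) = mannT i (extend f) (extend g) := by
  funext x
  rcases eq_some_comp_or_exists_eq_none x with ⟨a, rfl⟩ | ⟨j, hj⟩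
  · rw [extend_some_comp, mannT, extend_some_comp, mann]
    cases g a with
    | none => exact (extend_update_none f _ i).symm
    | some b =>
      rw [Option.bind_some, ← Function.comp_update, extend_some_comp]
  · rw [extend_of_eq_none _ hj, mannT, extend_of_eq_none g hj, extend_update_none]
end

section
/- For partial n-place functions on A, the projection quasi-order is v-negative: for any f, g₁,…,gₛ and index sequence i₁,…,iₛ, and any i occurring among i₁,…,iₛ, the domain of the iterated composition f ∘ᵢ₁ g₁ ⋯ ∘ᵢₛ gₛ is contained in the domain of μᵢ(∘ᵢ₁…∘ᵢₛ g₁…gₛ) = g_p ∘ᵢ_{p+1} g_{p+1} ⋯ ∘ᵢₛ gₛ, where p is the least index with i_p = i. -/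

lemma iter_mono {n : ℕ} {A : Type} (F G : PFn n A)
    (h : ∀ a, (F a).isSome → (G a).isSome) :
    ∀ (l : List (Fin n × PFn n A)) a, (iter F l a).isSome → (iter G l a).isSome := by
  intro l
  induction l generalizing F G with
  | nil => exact h
  | cons p l ih =>
    intro a ha
    refine ih _ _ (fun b hb => ?_) a ha
    simp only [mann] at hb ⊢
    cases hg : p.2 b with
    | none => simp [hg] at hb
    | some c => simp [hg] at hb ⊢; exact h _ hb

/-- The projection quasi-order is `v`-negative: the domain of
`f ∘ᵢ₁ g₁ ⋯ ∘ᵢₛ gₛ` is contained in the domain of `μᵢ(∘ᵢ₁…∘ᵢₛ g₁…gₛ)`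
whenever `i` occurs among `i₁,…,iₛ`. -/
theorem chi_v_negative {n : ℕ} {A : Type} (f : PFn n A)
    (l : List (Fin n × PFn n A)) (i : Fin n) (m : PFn n A)
    (hm : mu i l = some m) :
    ∀ a, ((iter f l) a).isSome → (m a).isSome := by
  induction l generalizing f m with
  | nil => simp [mu] at hm
  | cons p l ih =>
    simp only [mu] at hm
    by_cases hp : p.1 = i
    · simp only [hp, if_pos rfl] at hm
      subst hp
      cases hm
      refine iter_mono _ _ (fun b hb => ?_) l
      simp only [mann] at hb
      cases hg : p.2 b with
      | none => simp [hg] at hb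
      | some c => simp
    · rw [if_neg hp] at hm
      exact ih (mann p.1 f p.2) m hm
end
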